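/- Let g ∈ Mon(X) with ℓ(g) = n, and let L : Fact(G,g,I) → Comp(ℤ,n,I) be the map sending (x_L, x_1, …, x_k, x_R) to (ℓ(x_L), ℓ(x_1), …, ℓ(x_k), ℓ(x_R)). For every x ∈ Fact(G,g,I), L restricts to an order isomorphism from the lower set ↓(x) = {y ∈ Fact(G,g,I) : y ≤ x} onto the lower set ↓(L(x)) = {b ∈ Comp(ℤ,n,I) : b ≤ L(x)}. -/

import Mathlib

noncomputable def wlen {G : Type*} [Group G] (X : Set G) (g : G) : ℕ :=
  sInf {n | ∃ l : List G, l.length = n ∧ (∀ x ∈ l, x ∈ X) ∧ l.prod = g}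

/-- A linear factorization `(x_L, x₁, …, x_k, x_R)` of `g`, encoded as a triple. -/
def IsLinFact {G : Type*} [Group G] (X : Set G) (g : G) (p : G × List G × G) : Prop :=
  p.1 ∈ Submonoid.closure X ∧ p.2.2 ∈ Submonoid.closure X ∧
    (∀ a ∈ p.2.1, a ∈ Submonoid.closure X ∧ a ≠ 1) ∧
    p.1 * p.2.1.prod * p.2.2 = g ∧
    wlen X p.1 + (p.2.1.map (wlen X)).sum + wlen X p.2.2 = wlen X g

/-- A single merge of two consecutive entries of a linear factorization. -/
inductive MergeStep {G : Type*} [Group G] : G × List G × G → G × List G × G → Prop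
  | left (xL a : G) (l : List G) (xR : G) :
      MergeStep (xL * a, l, xR) (xL, a :: l, xR)
  | mid (xL : G) (l₁ : List G) (a b : G) (l₂ : List G) (xR : G) :
      MergeStep (xL, l₁ ++ (a * b) :: l₂, xR) (xL, l₁ ++ a :: b :: l₂, xR)
  | right (xL : G) (l : List G) (a xR : G) :
      MergeStep (xL, l, a * xR) (xL, l ++ [a], xR)

def FactLE {G : Type*} [Group G] : G × List G × G → G × List G × G → Prop :=
  Relation.ReflTransGen MergeStep

/-- A linear composition of `n` (an element of `Comp(ℤ,n,I)`). -/
def IsComp (n : ℕ) (p : ℕ × List ℕ × ℕ) : Prop :=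
  (∀ a ∈ p.2.1, 0 < a) ∧ p.1 + p.2.1.sum + p.2.2 = n

/-- A single merge of two consecutive entries of a composition. -/
inductive CMergeStep : ℕ × List ℕ × ℕ → ℕ × List ℕ × ℕ → Prop
  | left (aL a : ℕ) (l : List ℕ) (aR : ℕ) :
      CMergeStep (aL + a, l, aR) (aL, a :: l, aR)
  | mid (aL : ℕ) (l₁ : List ℕ) (a b : ℕ) (l₂ : List ℕ) (aR : ℕ) :
      CMergeStep (aL, l₁ ++ (a + b) :: l₂, aR) (aL, l₁ ++ a :: b :: l₂, aR)
  | right (aL : ℕ) (l : List ℕ) (a aR : ℕ) :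
      CMergeStep (aL, l, a + aR) (aL, l ++ [a], aR)

def CompLE : ℕ × List ℕ × ℕ → ℕ × List ℕ × ℕ → Prop :=
  Relation.ReflTransGen CMergeStep

/-- The map `L` recording the lengths of the entries of a linear factorization. -/
noncomputable def Lmap {G : Type*} [Group G] (X : Set G) (p : G × List G × G) :
    ℕ × List ℕ × ℕ :=
  (wlen X p.1, p.2.1.map (wlen X), wlen X p.2.2)

/-!
Record a factorization `(x_L, [x₁, …, x_k], x_R)` by its list of entries `x_L, x₁, …, x_k, x_R`.
Then `y ≤ x` says exactly that the entries of `x` can be cut into consecutive nonempty blocks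
whose products are the entries of `y`, and likewise for compositions with sums instead of
products. When `x` is a linear factorization of `g`, subadditivity of `ℓ` squeezed between
`ℓ(g)` and `ℓ(g)` makes `ℓ` additive on every block, so `L` turns a cutting of `x` into a cutting
of `L(x)` with the same block structure, and a cutting of `L(x)` lifts back to one of `x`.
The lift is unique: the interior entries of `L(x)` are positive, so a cutting of `L(x)` is
determined by its block sums, and a cutting of `x` by the block lengths it shares with the
cutting of `L(x)` it induces.
-/

open List
open Relation (ReflTransGen)

section Entries

variable {α : Type*}

def entries (p : α × List α × α) : List α := p.1 :: (p.2.1 ++ [p.2.2])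

theorem entries_injective : Function.Injective (entries (α := α)) := by
  rintro ⟨a, l, b⟩ ⟨c, m, d⟩ h
  simp only [entries, cons.injEq] at h
  obtain ⟨rfl, h⟩ := h
  obtain ⟨rfl, h⟩ := append_inj' h rfl
  simp_all

theorem two_le_length_entries (p : α × List α × α) : 2 ≤ (entries p).length := by
  simp [entries]

theorem exists_entries_eq {l : List α} (h : 2 ≤ l.length) : ∃ p, entries p = l := by
  match l, h with
  | a :: b :: t, _ =>
    exact ⟨(a, (b :: t).dropLast, (b :: t).getLast (cons_ne_nil b t)), by
      simp only [entries, dropLast_append_getLast]⟩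

@[to_additive]
theorem prod_entries {M : Type*} [Monoid M] (p : M × List M × M) :
    (entries p).prod = p.1 * p.2.1.prod * p.2.2 := by
  simp [entries, mul_assoc]

theorem reflTransGen_iff_reflTransGen_entries {R : α × List α × α → α × List α × α → Prop}
    {S : List α → List α → Prop} (hRS : ∀ p q, R p q ↔ S (entries p) (entries q))
    (hS : ∀ l l', S l l' → l.length ≤ l'.length) {p q : α × List α × α} :
    ReflTransGen R p q ↔ ReflTransGen S (entries p) (entries q) := by
  refine ⟨ReflTransGen.lift entries (fun p q h => (hRS p q).1 h) p q, fun h => ?_⟩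
  -- `S` never shortens a list, so every list on a chain from `entries p` is again of length `≥ 2`.
  suffices ∀ l, ReflTransGen S l (entries q) → ∀ p, entries p = l → ReflTransGen R p q from
    this _ h p rfl
  intro l hl
  induction hl using ReflTransGen.head_induction_on with
  | refl => exact fun p hp => entries_injective hp ▸ ReflTransGen.refl
  | @head l c hlc _ ih =>
    rintro p rfl
    obtain ⟨q', rfl⟩ := exists_entries_eq ((two_le_length_entries p).trans (hS _ _ hlc))
    exact ReflTransGen.head ((hRS p q').2 hlc) (ih q' rfl)

end Entries

section Blocking

variable {α β : Type*}

def IsBlocking (P : List (List α)) (l : List α) : Prop :=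
  (∀ b ∈ P, b ≠ []) ∧ P.flatten = l

theorem splitLengths_map_length_flatten (P : List (List α)) :
    (P.map length).splitLengths P.flatten = P := by
  induction P with
  | nil => rfl
  | cons b P ih => simp [ih]

theorem eq_of_flatten_eq_of_map_length_eq {P Q : List (List α)} (h : P.flatten = Q.flatten)
    (hlen : P.map length = Q.map length) : P = Q := by
  rw [← splitLengths_map_length_flatten P, ← splitLengths_map_length_flatten Q, h, hlen]

theorem isBlocking_singletons (l : List α) : IsBlocking (l.map ([·])) l := by
  refine ⟨by simp, ?_⟩
  induction l <;> simp_all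

theorem IsBlocking.eq_nil_iff {P : List (List α)} {l : List α} (hP : IsBlocking P l) :
    l = [] ↔ P = [] := by
  rw [← hP.2, flatten_eq_nil_iff]
  exact ⟨fun h => eq_nil_iff_forall_not_mem.2 fun b hb => hP.1 b hb (h b hb), by simp_all⟩

theorem IsBlocking.map {P : List (List α)} {l : List α} (hP : IsBlocking P l) (f : α → β) :
    IsBlocking (P.map (List.map f)) (l.map f) :=
  ⟨by simpa using hP.1, by rw [← hP.2, map_flatten]⟩

theorem IsBlocking.exists_of_map {Q : List (List β)} {l : List α} {f : α → β}
    (hQ : IsBlocking Q (l.map f)) : ∃ P, IsBlocking P l ∧ P.map (List.map f) = Q := by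
  have hsum : (Q.map length).sum = l.length := by rw [← length_flatten, hQ.2, length_map]
  set P := (Q.map length).splitLengths l
  have hPl : P.flatten = l := flatten_splitLengths _ _ hsum.ge
  have hPQ : P.map (List.map f) = Q := by
    refine eq_of_flatten_eq_of_map_length_eq (by rw [← map_flatten, hPl, hQ.2]) ?_
    simpa [map_map, Function.comp_def] using map_splitLengths_length l _ hsum.le
  refine ⟨P, ⟨fun b hb hnil => hQ.1 (b.map f) ?_ (by simp [hnil]), hPl⟩, hPQ⟩
  exact hPQ ▸ mem_map_of_mem hb

theorem IsBlocking.flatten {P : List (List (List α))} {Q : List (List α)} {l : List α}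
    (hP : IsBlocking P Q) (hQ : IsBlocking Q l) : IsBlocking (P.map List.flatten) l := by
  refine ⟨?_, by rw [← flatten_flatten, hP.2, hQ.2]⟩
  simp only [mem_map, forall_exists_index, and_imp]
  rintro _ c hc rfl
  obtain ⟨b, hb⟩ := exists_mem_of_ne_nil c (hP.1 c hc)
  have hbQ : b ∈ Q := hP.2 ▸ mem_flatten_of_mem hc hb
  exact fun h => hQ.1 b hbQ (flatten_eq_nil_iff.1 h b hb)

end Blocking

section Merge

variable {M : Type*}

@[to_additive ListAddMerge]
def ListMerge [Mul M] (m l : List M) : Prop :=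
  ∃ l₁ a b l₂, l = l₁ ++ a :: b :: l₂ ∧ m = l₁ ++ (a * b) :: l₂

@[to_additive]
theorem ListMerge.length_le [Mul M] {m l : List M} (h : ListMerge m l) :
    m.length ≤ l.length := by
  obtain ⟨l₁, a, b, l₂, rfl, rfl⟩ := h
  simp

@[to_additive]
theorem ListMerge.cons [Mul M] {m l : List M} (c : M) (h : ListMerge m l) :
    ListMerge (c :: m) (c :: l) := by
  obtain ⟨l₁, a, b, l₂, rfl, rfl⟩ := h
  exact ⟨c :: l₁, a, b, l₂, rfl, rfl⟩

@[to_additive]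
theorem ListMerge.elim_entries [Mul M] {R : M × List M × M → M × List M × M → Prop}
    (left : ∀ xL a l xR, R (xL * a, l, xR) (xL, a :: l, xR))
    (mid : ∀ xL l₁ a b l₂ xR, R (xL, l₁ ++ (a * b) :: l₂, xR) (xL, l₁ ++ a :: b :: l₂, xR))
    (right : ∀ xL l a xR, R (xL, l, a * xR) (xL, l ++ [a], xR))
    {p q : M × List M × M} (h : ListMerge (entries p) (entries q)) : R p q := by
  obtain ⟨l₁, a, b, l₂, hq, hp⟩ := h
  obtain ⟨pL, pm, pR⟩ := p
  obtain ⟨qL, qm, qR⟩ := q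
  simp only [entries] at hp hq
  rcases l₁ with _ | ⟨c, l₁⟩
  · simp only [nil_append, cons.injEq] at hp hq
    obtain ⟨rfl, rfl⟩ := hp
    obtain ⟨rfl, hq⟩ := hq
    obtain ⟨rfl, rfl⟩ := append_singleton_inj.1 (hq.trans (cons_append ..).symm)
    exact left _ _ _ _
  simp only [cons_append, cons.injEq] at hp hq
  obtain ⟨rfl, hp⟩ := hp
  obtain ⟨rfl, hq⟩ := hq
  rcases eq_nil_or_concat l₂ with rfl | ⟨l₂, d, rfl⟩
  · obtain ⟨rfl, rfl⟩ := append_singleton_inj.1 hp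
    rw [show [a, b] = [a] ++ [b] from rfl, ← append_assoc] at hq
    obtain ⟨rfl, rfl⟩ := append_singleton_inj.1 hq
    exact right _ _ _ _
  · simp only [concat_eq_append, ← cons_append, ← append_assoc] at hp hq
    obtain ⟨rfl, rfl⟩ := append_singleton_inj.1 hp
    obtain ⟨rfl, rfl⟩ := append_singleton_inj.1 hq
    exact mid _ _ _ _ _ _

end Merge

section Coarsening

variable {M : Type*} [Monoid M]

@[to_additive AddCoarsens]
def Coarsens (m l : List M) : Prop :=
  ∃ P, IsBlocking P l ∧ P.map List.prod = m

@[to_additive]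
theorem Coarsens.refl (l : List M) : Coarsens l l :=
  ⟨l.map ([·]), isBlocking_singletons l, by simp [List.map_map, Function.comp_def]⟩

@[to_additive]
theorem Coarsens.trans {n m l : List M} (hnm : Coarsens n m) (hml : Coarsens m l) :
    Coarsens n l := by
  obtain ⟨P, hP, rfl⟩ := hnm
  obtain ⟨Q, hQ, rfl⟩ := hml
  obtain ⟨P₀, hP₀, rfl⟩ := hP.exists_of_map
  refine ⟨P₀.map List.flatten, hP₀.flatten hQ, ?_⟩
  simp [List.map_map, Function.comp_def, prod_flatten]

@[to_additive]
theorem ListMerge.coarsens {m l : List M} (h : ListMerge m l) : Coarsens m l := by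
  obtain ⟨l₁, a, b, l₂, rfl, rfl⟩ := h
  refine ⟨l₁.map ([·]) ++ [a, b] :: l₂.map ([·]), ⟨?_, ?_⟩, ?_⟩
  · simp only [mem_append, mem_map, mem_cons]
    rintro _ (⟨_, _, rfl⟩ | rfl | ⟨_, _, rfl⟩) <;> simp
  · simp [(isBlocking_singletons _).2]
  · simp [List.map_map, Function.comp_def]

@[to_additive reflTransGen_listAddMerge_sum_append]
theorem reflTransGen_listMerge_prod_append {b : List M} (hb : b ≠ []) (t : List M) :
    ReflTransGen ListMerge (b.prod :: t) (b ++ t) := by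
  induction b with
  | nil => exact absurd rfl hb
  | cons a b ih =>
    rcases eq_or_ne b [] with rfl | hb'
    · simpa using ReflTransGen.refl
    · refine ReflTransGen.head ⟨[], a, b.prod, t, rfl, by simp⟩ ?_
      exact ReflTransGen.lift (a :: ·) (fun _ _ h => h.cons a) _ _ (ih hb')

@[to_additive reflTransGen_listAddMerge_iff]
theorem reflTransGen_listMerge_iff {m l : List M} : ReflTransGen ListMerge m l ↔ Coarsens m l := by
  refine ⟨fun h => ?_, ?_⟩
  · induction h with
    | refl => exact Coarsens.refl m
    | tail _ hstep ih => exact ih.trans hstep.coarsens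
  · rintro ⟨P, ⟨hne, rfl⟩, rfl⟩
    induction P with
    | nil => exact ReflTransGen.refl
    | cons b P ih =>
      have hb : b ≠ [] := hne b mem_cons_self
      have ih' := ih fun c hc => hne c (mem_cons_of_mem b hc)
      simp only [map_cons, flatten_cons]
      exact (ReflTransGen.lift (b.prod :: ·) (fun _ _ h => h.cons _) _ _ ih').trans
        (reflTransGen_listMerge_prod_append hb _)

end Coarsening

theorem mergeStep_iff {G : Type*} [Group G] {p q : G × List G × G} :
    MergeStep p q ↔ ListMerge (entries p) (entries q) := by
  refine ⟨fun h => ?_, ListMerge.elim_entries MergeStep.left MergeStep.mid MergeStep.right⟩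
  cases h with
  | left xL a l xR => exact ⟨[], xL, a, l ++ [xR], rfl, rfl⟩
  | mid xL l₁ a b l₂ xR => exact ⟨xL :: l₁, a, b, l₂ ++ [xR], by simp [entries], by simp [entries]⟩
  | right xL l a xR => exact ⟨xL :: l, a, xR, [], by simp [entries], by simp [entries]⟩

theorem cMergeStep_iff {p q : ℕ × List ℕ × ℕ} :
    CMergeStep p q ↔ ListAddMerge (entries p) (entries q) := by
  refine ⟨fun h => ?_, ListAddMerge.elim_entries CMergeStep.left CMergeStep.mid CMergeStep.right⟩
  cases h with
  | left xL a l xR => exact ⟨[], xL, a, l ++ [xR], rfl, rfl⟩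
  | mid xL l₁ a b l₂ xR => exact ⟨xL :: l₁, a, b, l₂ ++ [xR], by simp [entries], by simp [entries]⟩
  | right xL l a xR => exact ⟨xL :: l, a, xR, [], by simp [entries], by simp [entries]⟩

theorem factLE_iff_coarsens {G : Type*} [Group G] {y x : G × List G × G} :
    FactLE y x ↔ Coarsens (entries y) (entries x) :=
  (reflTransGen_iff_reflTransGen_entries (fun _ _ => mergeStep_iff)
    fun _ _ => ListMerge.length_le).trans reflTransGen_listMerge_iff

theorem compLE_iff_addCoarsens {y x : ℕ × List ℕ × ℕ} :
    CompLE y x ↔ AddCoarsens (entries y) (entries x) :=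
  (reflTransGen_iff_reflTransGen_entries (fun _ _ => cMergeStep_iff)
    fun _ _ => ListAddMerge.length_le).trans reflTransGen_listAddMerge_iff

section PosInterior

def PosInterior (s : List ℕ) : Prop :=
  ∀ u e v, s = u ++ e :: v → u ≠ [] → v ≠ [] → 0 < e

theorem PosInterior.of_append {b t : List ℕ} (h : PosInterior (b ++ t)) (hb : b ≠ []) :
    PosInterior t := by
  rintro u e v rfl - hv
  exact h (b ++ u) e v (append_assoc ..).symm (by simp [hb]) hv

theorem PosInterior.eq_nil_of_sum_eq_zero {b e u : List ℕ} (h : PosInterior (b ++ e ++ u))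
    (hb : b ≠ []) (he : e.sum = 0) (hu : u = [] → e = []) : e = [] := by
  rcases e with _ | ⟨e₀, e⟩
  · rfl
  have he₀ : e₀ = 0 := by simp only [sum_cons] at he; omega
  by_cases hv : e ++ u = []
  · exact hu (append_eq_nil_iff.1 hv).2
  · exact absurd (h b e₀ (e ++ u) (by simp) hb hv) (by omega)

theorem PosInterior.head_eq {b c t u : List ℕ} (h : PosInterior (b ++ t)) (hbc : b ++ t = c ++ u)
    (hb : b ≠ []) (hc : c ≠ []) (hsum : b.sum = c.sum) (htu : t = [] ↔ u = []) : b = c := by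
  rcases append_eq_append_iff.1 hbc with ⟨e, rfl, rfl⟩ | ⟨e, rfl, rfl⟩
  · have he : e = [] := by
      refine (append_assoc b e u ▸ h).eq_nil_of_sum_eq_zero hb (by simpa using hsum) ?_
      exact fun hu => (append_eq_nil_iff.1 (htu.2 hu)).1
    simp [he]
  · have he : e = [] := by
      refine (append_assoc c e t ▸ hbc ▸ h).eq_nil_of_sum_eq_zero hc (by simpa using hsum) ?_
      exact fun ht => (append_eq_nil_iff.1 (htu.1 ht)).1
    simp [he]

theorem PosInterior.blocking_eq_of_map_sum_eq {s : List ℕ} (hs : PosInterior s)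
    {P Q : List (List ℕ)} (hP : IsBlocking P s) (hQ : IsBlocking Q s)
    (hsum : P.map List.sum = Q.map List.sum) : P = Q := by
  induction P generalizing Q s with
  | nil => exact (map_eq_nil_iff.1 hsum.symm).symm
  | cons b P ih =>
    obtain _ | ⟨c, Q⟩ := Q
    · simp at hsum
    simp only [map_cons, cons.injEq] at hsum
    obtain ⟨hP, rfl⟩ := hP
    obtain ⟨hQ, hQs⟩ := hQ
    simp only [mem_cons, forall_eq_or_imp] at hP hQ
    have hP' : IsBlocking P P.flatten := ⟨hP.2, rfl⟩
    have hQ' : IsBlocking Q Q.flatten := ⟨hQ.2, rfl⟩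
    have htu : P.flatten = [] ↔ Q.flatten = [] := by
      rw [hP'.eq_nil_iff, hQ'.eq_nil_iff, ← map_eq_nil_iff (f := List.sum), hsum.2,
        map_eq_nil_iff]
    simp only [flatten_cons] at hs hQs
    obtain rfl := hs.head_eq hQs.symm hP.1 hQ.1 hsum.1 htu
    rw [ih (hs.of_append hP.1) hP' ⟨hQ.2, append_cancel_left hQs⟩ hsum.2]

end PosInterior

section WordLength

variable {G : Type*} [Group G] {X : Set G}

theorem wlen_le_length {l : List G} (hl : ∀ x ∈ l, x ∈ X) : wlen X l.prod ≤ l.length :=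
  Nat.sInf_le ⟨l, rfl, hl, rfl⟩

theorem exists_length_eq_wlen {a : G} (ha : a ∈ Submonoid.closure X) :
    ∃ l : List G, l.length = wlen X a ∧ (∀ x ∈ l, x ∈ X) ∧ l.prod = a := by
  obtain ⟨l, hl, rfl⟩ := Submonoid.exists_list_of_mem_closure ha
  exact Nat.sInf_mem (s := {n | ∃ m : List G, m.length = n ∧ (∀ x ∈ m, x ∈ X) ∧ m.prod = l.prod})
    ⟨l.length, l, rfl, hl, rfl⟩

theorem wlen_one : wlen X (1 : G) = 0 :=
  Nat.le_zero.1 (wlen_le_length (l := []) (by simp))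

theorem wlen_pos {a : G} (ha : a ∈ Submonoid.closure X) (h1 : a ≠ 1) : 0 < wlen X a := by
  obtain ⟨l, hlen, -, rfl⟩ := exists_length_eq_wlen ha
  rw [← hlen, length_pos_iff]
  rintro rfl
  exact h1 prod_nil

theorem wlen_mul_le {a b : G} (ha : a ∈ Submonoid.closure X) (hb : b ∈ Submonoid.closure X) :
    wlen X (a * b) ≤ wlen X a + wlen X b := by
  obtain ⟨la, hla, hXa, rfl⟩ := exists_length_eq_wlen ha
  obtain ⟨lb, hlb, hXb, rfl⟩ := exists_length_eq_wlen hb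
  rw [← hla, ← hlb, ← length_append, ← prod_append]
  exact wlen_le_length fun x hx => (mem_append.1 hx).elim (hXa x) (hXb x)

theorem wlen_prod_le {l : List G} (hl : ∀ a ∈ l, a ∈ Submonoid.closure X) :
    wlen X l.prod ≤ (l.map (wlen X)).sum := by
  induction l with
  | nil => simp [wlen_one]
  | cons a l ih =>
    simp only [forall_mem_cons] at hl
    rw [prod_cons, map_cons, sum_cons]
    exact (wlen_mul_le hl.1 (Submonoid.list_prod_mem _ hl.2)).trans (by simpa using ih hl.2)

end WordLength

section LinearFactorization

variable {G : Type*} [Group G] {X : Set G} {g : G}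

theorem entries_Lmap (p : G × List G × G) : entries (Lmap X p) = (entries p).map (wlen X) := by
  simp [entries, Lmap]

theorem isLinFact_iff {p : G × List G × G} :
    IsLinFact X g p ↔ (∀ a ∈ entries p, a ∈ Submonoid.closure X) ∧ (∀ a ∈ p.2.1, a ≠ 1) ∧
      (entries p).prod = g ∧ ((entries p).map (wlen X)).sum = wlen X g := by
  rw [← entries_Lmap, sum_entries, prod_entries]
  simp only [IsLinFact, entries, Lmap, mem_cons, mem_append, not_mem_nil, or_false, or_imp,
    forall_and, forall_eq]
  tauto

namespace IsLinFact

theorem wlen_prod_eq_sum {x : G × List G × G} (hx : IsLinFact X g x) {P : List (List G)}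
    (hP : IsBlocking P (entries x)) : ∀ b ∈ P, wlen X b.prod = (b.map (wlen X)).sum := by
  obtain ⟨hcl, -, hprod, hsum⟩ := isLinFact_iff.1 hx
  have hblock : ∀ b ∈ P, ∀ a ∈ b, a ∈ Submonoid.closure X := fun b hb a ha =>
    hcl a (hP.2 ▸ mem_flatten_of_mem hb ha)
  have hle : ∀ b ∈ P, wlen X b.prod ≤ (b.map (wlen X)).sum := fun b hb =>
    wlen_prod_le (hblock b hb)
  have hge : (P.map fun b => (b.map (wlen X)).sum).sum ≤ (P.map fun b => wlen X b.prod).sum :=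
    calc (P.map fun b => (b.map (wlen X)).sum).sum = wlen X g := by
          rw [← hsum, ← hP.2, map_flatten, sum_flatten, map_map]; rfl
      _ = wlen X (P.map List.prod).prod := by rw [← prod_flatten, hP.2, hprod]
      _ ≤ ((P.map List.prod).map (wlen X)).sum := by
          refine wlen_prod_le fun a ha => ?_
          obtain ⟨b, hb, rfl⟩ := mem_map.1 ha
          exact Submonoid.list_prod_mem _ (hblock b hb)
      _ = (P.map fun b => wlen X b.prod).sum := by rw [map_map]; rfl
  by_contra! ⟨b, hb, hne⟩
  exact (sum_lt_sum _ _ hle ⟨b, hb, (hle b hb).lt_of_ne hne⟩).not_ge hge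

theorem map_wlen_prod {x : G × List G × G} (hx : IsLinFact X g x) {P : List (List G)}
    (hP : IsBlocking P (entries x)) :
    (P.map List.prod).map (wlen X) = (P.map (List.map (wlen X))).map List.sum := by
  simp only [map_map]
  exact map_congr_left fun b hb => hx.wlen_prod_eq_sum hP b hb

theorem isComp_Lmap {x : G × List G × G} (hx : IsLinFact X g x) :
    IsComp (wlen X g) (Lmap X x) := by
  refine ⟨fun a ha => ?_, hx.2.2.2.2⟩
  obtain ⟨c, hc, rfl⟩ := mem_map.1 ha
  exact wlen_pos (hx.2.2.1 c hc).1 (hx.2.2.1 c hc).2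

theorem posInterior {x : G × List G × G} (hx : IsLinFact X g x) :
    PosInterior (entries (Lmap X x)) := by
  rintro u e v h hu hv
  obtain ⟨u₀, u, rfl⟩ := exists_cons_of_ne_nil hu
  obtain ⟨v, d, rfl⟩ := (eq_nil_or_concat v).resolve_left hv
  simp only [entries, Lmap, concat_eq_append, cons_append, cons.injEq] at h
  have hmid : x.2.1.map (wlen X) = u ++ e :: v :=
    (append_singleton_inj.1 (h.2.trans (by simp : _ = (u ++ e :: v) ++ [d]))).1
  exact hx.isComp_Lmap.1 e (by simp [Lmap, hmid])

theorem compLE_Lmap {x y : G × List G × G} (hx : IsLinFact X g x) (h : FactLE y x) :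
    CompLE (Lmap X y) (Lmap X x) := by
  obtain ⟨P, hP, hPy⟩ := factLE_iff_coarsens.1 h
  refine compLE_iff_addCoarsens.2 ⟨P.map (List.map (wlen X)), entries_Lmap x ▸ hP.map _, ?_⟩
  rw [entries_Lmap, ← hPy, hx.map_wlen_prod hP]

theorem eq_of_Lmap_eq {x y z : G × List G × G} (hx : IsLinFact X g x) (hy : FactLE y x)
    (hz : FactLE z x) (h : Lmap X y = Lmap X z) : y = z := by
  obtain ⟨P, hP, hPy⟩ := factLE_iff_coarsens.1 hy
  obtain ⟨Q, hQ, hQz⟩ := factLE_iff_coarsens.1 hz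
  have hPQ : P.map (List.map (wlen X)) = Q.map (List.map (wlen X)) := by
    refine hx.posInterior.blocking_eq_of_map_sum_eq (entries_Lmap x ▸ hP.map _)
      (entries_Lmap x ▸ hQ.map _) ?_
    rw [← hx.map_wlen_prod hP, ← hx.map_wlen_prod hQ, hPy, hQz, ← entries_Lmap, ← entries_Lmap, h]
  have : P = Q := by
    refine eq_of_flatten_eq_of_map_length_eq (hP.2.trans hQ.2.symm) ?_
    simpa [map_map, Function.comp_def] using congrArg (List.map length) hPQ
  exact entries_injective (by rw [← hPy, ← hQz, this])

theorem exists_factLE_Lmap_eq {x : G × List G × G} {b : ℕ × List ℕ × ℕ} (hx : IsLinFact X g x)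
    (hb : CompLE b (Lmap X x)) : ∃ y, FactLE y x ∧ Lmap X y = b := by
  obtain ⟨D, hD, hDb⟩ := compLE_iff_addCoarsens.1 hb
  obtain ⟨P, hP, rfl⟩ := (entries_Lmap x ▸ hD).exists_of_map
  obtain ⟨y, hy⟩ := exists_entries_eq (l := P.map List.prod)
    (by simpa [← hDb] using two_le_length_entries b)
  refine ⟨y, factLE_iff_coarsens.2 ⟨P, hP, hy.symm⟩, entries_injective ?_⟩
  rw [entries_Lmap, hy, hx.map_wlen_prod hP, hDb]

theorem of_factLE {x y : G × List G × G} (hx : IsLinFact X g x) (h : FactLE y x)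
    (hy : ∀ a ∈ y.2.1, a ≠ 1) : IsLinFact X g y := by
  obtain ⟨hcl, -, hprod, hsum⟩ := isLinFact_iff.1 hx
  obtain ⟨P, hP, hPy⟩ := factLE_iff_coarsens.1 h
  refine isLinFact_iff.2 ⟨?_, hy, ?_, ?_⟩
  · rw [← hPy]
    intro a ha
    obtain ⟨b, hb, rfl⟩ := mem_map.1 ha
    exact Submonoid.list_prod_mem _ fun a ha => hcl a (hP.2 ▸ mem_flatten_of_mem hb ha)
  · rw [← hPy, ← prod_flatten, hP.2, hprod]
  · rw [← hPy, hx.map_wlen_prod hP, ← sum_flatten, ← map_flatten, hP.2, hsum]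

end IsLinFact

end LinearFactorization

theorem stmt3_general {G : Type*} [Group G] (X : Set G)
    (g : G)
    (n : ℕ) (hn : wlen X g = n)
    (x : G × List G × G) (hx : IsLinFact X g x) :
    -- `L` maps `↓(x)` into `↓(L(x))`
    (∀ y, IsLinFact X g y → FactLE y x → IsComp n (Lmap X y) ∧ CompLE (Lmap X y) (Lmap X x)) ∧
    -- `L` is order-preserving and order-reflecting on `↓(x)`
    (∀ y z, IsLinFact X g y → IsLinFact X g z → FactLE y x → FactLE z x →
      (FactLE y z ↔ CompLE (Lmap X y) (Lmap X z))) ∧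
    -- `L` is injective on `↓(x)`
    (∀ y z, IsLinFact X g y → IsLinFact X g z → FactLE y x → FactLE z x →
      Lmap X y = Lmap X z → y = z) ∧
    -- `L` maps `↓(x)` onto `↓(L(x))`
    (∀ b, IsComp n b → CompLE b (Lmap X x) →
      ∃ y, IsLinFact X g y ∧ FactLE y x ∧ Lmap X y = b) := by
  subst hn
  refine ⟨fun y hy hyx => ⟨hy.isComp_Lmap, hx.compLE_Lmap hyx⟩,
    fun y z _ hz hyx hzx => ⟨hz.compLE_Lmap, fun h => ?_⟩,
    fun y z _ _ hyx hzx => hx.eq_of_Lmap_eq hyx hzx, fun b hb hbx => ?_⟩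
  · obtain ⟨y', hy'z, hy'⟩ := hz.exists_factLE_Lmap_eq h
    rwa [← hx.eq_of_Lmap_eq (Relation.ReflTransGen.trans hy'z hzx) hyx hy']
  · obtain ⟨y, hyx, rfl⟩ := hx.exists_factLE_Lmap_eq hbx
    refine ⟨y, hx.of_factLE hyx fun a ha ha1 => ?_, hyx, rfl⟩
    have hpos := hb.1 (wlen X a) (mem_map_of_mem ha)
    rw [ha1, wlen_one] at hpos
    exact lt_irrefl 0 hpos

/-- for every linear factorization `x` of `g` (with `ℓ(g) = n`), the map `L`
restricts to an order isomorphism from the lower set `↓(x)` in `Fact(G,g,I)` onto the lower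
set `↓(L(x))` in `Comp(ℤ,n,I)`. -/
theorem stmt3 {G : Type*} [Group G] (X : Set G)
    (hX : ∀ g x, x ∈ X → g * x * g⁻¹ ∈ X)
    (g : G) (hg : g ∈ Submonoid.closure X)
    (n : ℕ) (hn : wlen X g = n)
    (x : G × List G × G) (hx : IsLinFact X g x) :
    -- `L` maps `↓(x)` into `↓(L(x))`
    (∀ y, IsLinFact X g y → FactLE y x → IsComp n (Lmap X y) ∧ CompLE (Lmap X y) (Lmap X x)) ∧
    -- `L` is order-preserving and order-reflecting on `↓(x)`
    (∀ y z, IsLinFact X g y → IsLinFact X g z → FactLE y x → FactLE z x →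
      (FactLE y z ↔ CompLE (Lmap X y) (Lmap X z))) ∧
    -- `L` is injective on `↓(x)`
    (∀ y z, IsLinFact X g y → IsLinFact X g z → FactLE y x → FactLE z x →
      Lmap X y = Lmap X z → y = z) ∧
    -- `L` maps `↓(x)` onto `↓(L(x))`
    (∀ b, IsComp n b → CompLE b (Lmap X x) →
      ∃ y, IsLinFact X g y ∧ FactLE y x ∧ Lmap X y = b) :=
  stmt3_general X g n hn x hx
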